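/- arXiv:2602.10601 — 2 statements merged into one kernel-verified Lean document; each statement's English description precedes it below -/
import Mathlib

section
/- With the data derived from a fixed reduced election E_{C'} as described in the context (where score_{E_{C'}}(w) and score_{E_{C'}}(p) denote the scores under the given short scoring rule), let M be any matching in the auxiliary bipartite graph G that covers every class in 𝒬̂ and every non-secure party in 𝒫 \ {P, P_w}. Let C_M consist of p, w, for each edge (P̃, Q) ∈ M one candidate of P̃ that is well placed for Q, and for each party of 𝒫 \ {P, P_w} not covered by M one safe candidate of that party. Then C_M is a nominee set, and the scores in the corresponding reduced election satisfy score_{E_{C_M}}(p) ≤ score_{E_{C'}}(p) and score_{E_{C_M}}(w) ≥ score_{E_{C'}}(w). In particular, if score_{E_{C'}}(w) > score_{E_{C'}}(p), then p is not a winner of E_{C_M}. -/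
open scoped Classical

noncomputable section

/-- The position (`0`-based) coupled with voter type `i` in `Q⁺`: the unique
`j < ℓ` with `(i,j) ∈ Q`, or the sentinel value `ℓ` if there is none. -/
def qrank {τ ℓ : ℕ} (Q : Finset (Fin τ × Fin ℓ)) (i : Fin τ) : ℕ :=
  if h : ∃ j : Fin ℓ, (i, j) ∈ Q then (Classical.choose h).val else ℓ

/-- `c` is well placed (with respect to `p` and `w`) for the class `Q`, where
`Qp` and `Qw` are the classes of the parties of `p` and of `w`. -/
def WellPlaced {C : Type*} {τ ℓ : ℕ} (tpref : Fin τ → C → C → Prop) (p w : C)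
    (Qp Qw : Finset (Fin τ × Fin ℓ)) (c : C) (Q : Finset (Fin τ × Fin ℓ)) : Prop :=
  ∀ i : Fin τ,
    ((qrank Q i = ℓ ∧ qrank Qp i = ℓ) ∨ (tpref i c p ↔ qrank Q i < qrank Qp i)) ∧
    ((qrank Q i = ℓ ∧ qrank Qw i = ℓ) ∨ (tpref i c w ↔ qrank Q i < qrank Qw i))

/-- `c` is safe: every voter type that awards points to `w` prefers `w` to `c`. -/
def Safe {C : Type*} {τ ℓ : ℕ} (tpref : Fin τ → C → C → Prop) (w : C)
    (Qw : Finset (Fin τ × Fin ℓ)) (c : C) : Prop :=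
  ∀ i : Fin τ, qrank Qw i ≠ ℓ → tpref i w c

/-- The class of all positions occupied by the party `Pt`. -/
def Qclass {C : Type*} {τ ℓ : ℕ} (prt : Fin τ → Fin ℓ → Finset C)
    (Pt : Finset C) : Finset (Fin τ × Fin ℓ) :=
  Finset.univ.filter fun ij => prt ij.1 ij.2 = Pt

/-- `𝒬̂`: the classes of the structure of the reduced election other than the
classes of the parties of `p` and of `w`. -/
def Qhat {C : Type*} {τ ℓ : ℕ} (prt : Fin τ → Fin ℓ → Finset C)
    (P Pw : Finset C) : Finset (Finset (Fin τ × Fin ℓ)) :=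
  (Finset.univ.filter fun ij : Fin τ × Fin ℓ =>
      prt ij.1 ij.2 ≠ P ∧ prt ij.1 ij.2 ≠ Pw).image
    fun ij => Qclass prt (prt ij.1 ij.2)

/-- Score of `c` over the nominee set `C'` for the scoring vector `(a 0, a 1, …)`,
where `a j` is the number of points a voter gives to a candidate preceded by
exactly `j` nominees in her preference order. -/
def posScore {C V : Type*} [Fintype V] (a : ℕ → ℤ) (pref : V → C → C → Prop)
    (C' : Finset C) (c : C) : ℤ :=
  ∑ v : V, a ((C'.filter fun c' => pref v c' c).card)

/-- `C'` contains exactly one nominee of each party of `Ps`. -/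
def IsNomineeSet {C : Type*} (Ps : Finset (Finset C)) (C' : Finset C) : Prop :=
  ∀ Pt ∈ Ps, (C' ∩ Pt).card = 1

/-- `Ps` is a partition of the candidate set into nonempty parties. -/
def IsPartition {C : Type*} [Fintype C] (Ps : Finset (Finset C)) : Prop :=
  (∀ Pt ∈ Ps, Pt.Nonempty) ∧ ∀ c : C, ∃! Pt, Pt ∈ Ps ∧ c ∈ Pt

/-!
Fix a voter type `i`. Send each position `j < ℓ` of its order in `E_{C'}` to the party sitting
there if that is the party of `p` or of `w`, and otherwise to the party matched with the class
of the party sitting there (`matchedParty`); this map is injective. On the positions above `p`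
it lands in parties whose new nominee still beats `p`, because a well-placed nominee keeps the
relative order of its class and the class of `p`; so `p` keeps at least as many competitors
among the first `ℓ` positions. Conversely, a new nominee beating `w` is `p` or the nominee of a
matched party, since safe nominees lose to `w`; by well-placedness it is the image of a position
above `w`, so `w` gains no competitor.
-/

open Finset

def prefRank {C : Type*} (σ : C → C → Prop) (S : Finset C) (c : C) : ℕ :=
  #(S.filter fun x => σ x c)

section Rank

variable {C : Type*} {σ : C → C → Prop} {S : Finset C} {c d : C}

theorem prefRank_lt_prefRank_iff [IsStrictTotalOrder C σ] (hc : c ∈ S) (hd : d ∈ S) :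
    prefRank σ S c < prefRank σ S d ↔ σ c d := by
  have lt_of_rel : ∀ {c d}, c ∈ S → σ c d → prefRank σ S c < prefRank σ S d := by
    intro c d hc hcd
    refine card_lt_card ((ssubset_iff_of_subset ?_).2 ⟨c, ?_, ?_⟩)
    · exact fun x hx => mem_filter.2 ⟨(mem_filter.1 hx).1, _root_.trans (mem_filter.1 hx).2 hcd⟩
    · exact mem_filter.2 ⟨hc, hcd⟩
    · exact fun h => irrefl_of σ c (mem_filter.1 h).2
  refine ⟨fun h => ?_, lt_of_rel hc⟩
  rcases trichotomous_of σ c d with hcd | rfl | hdc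
  · exact hcd
  · exact absurd h (lt_irrefl _)
  · exact absurd (lt_of_rel hd hdc) h.not_gt

theorem prefRank_injOn [IsStrictTotalOrder C σ] : Set.InjOn (prefRank σ S) S := by
  intro c hc d hd h
  rcases trichotomous_of σ c d with hcd | hcd | hdc
  · exact absurd ((prefRank_lt_prefRank_iff hc hd).2 hcd) h.not_lt
  · exact hcd
  · exact absurd ((prefRank_lt_prefRank_iff hd hc).2 hdc) h.not_gt

theorem prefRank_image {ι : Type*} {s : Finset ι} {f : ι → C} (hf : Set.InjOn f s) :
    prefRank σ (s.image f) c = #(s.filter fun x => σ (f x) c) := by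
  rw [prefRank, filter_image]
  exact card_image_of_injOn (hf.mono (filter_subset _ _))

end Rank

section Scoring

variable {a : ℕ → ℤ} {ℓ : ℕ}

theorem antitone_of_short_scoring (hanti : ∀ i j : ℕ, i ≤ j → j < ℓ → a j ≤ a i)
    (hnonneg : 0 ≤ a (ℓ - 1)) (hzero : ∀ j : ℕ, ℓ ≤ j → a j = 0) : Antitone a := by
  intro m n hmn
  by_cases hn : n < ℓ
  · exact hanti m n hmn hn
  rw [hzero n (not_lt.1 hn)]
  by_cases hm : m < ℓ
  · exact hnonneg.trans (hanti m (ℓ - 1) (by omega) (by omega))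
  · exact (hzero m (not_lt.1 hm)).ge

theorem apply_min_eq_of_eq_zero (hzero : ∀ j : ℕ, ℓ ≤ j → a j = 0) (r : ℕ) :
    a (min r ℓ) = a r := by
  rcases le_total r ℓ with h | h
  · rw [min_eq_left h]
  · rw [min_eq_right h, hzero ℓ le_rfl, hzero r h]

theorem posScore_le_posScore {C V : Type*} [Fintype V] {pref : V → C → C → Prop}
    {S T : Finset C} {c d : C} (ha : Antitone a) (hzero : ∀ j : ℕ, ℓ ≤ j → a j = 0)
    (h : ∀ v, min (prefRank (pref v) S c) ℓ ≤ min (prefRank (pref v) T d) ℓ) :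
    posScore a pref T d ≤ posScore a pref S c := by
  refine sum_le_sum fun v _ => ?_
  change a (prefRank (pref v) T d) ≤ a (prefRank (pref v) S c)
  rw [← apply_min_eq_of_eq_zero hzero, ← apply_min_eq_of_eq_zero hzero (prefRank _ S c)]
  exact ha (h v)

end Scoring

section Nominees

variable {C : Type*} {Ps : Finset (Finset C)}

theorem IsNomineeSet.eq_of_mem {C' A : Finset C} (hC' : IsNomineeSet Ps C') (hA : A ∈ Ps)
    {c d : C} (hc : c ∈ C') (hcA : c ∈ A) (hd : d ∈ C') (hdA : d ∈ A) : c = d :=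
  card_le_one.1 (hC' A hA).le c (mem_inter.2 ⟨hc, hcA⟩) d (mem_inter.2 ⟨hd, hdA⟩)

variable [Fintype C]

theorem IsPartition.eq_of_mem (hpart : IsPartition Ps) {A B : Finset C} {c : C}
    (hA : A ∈ Ps) (hB : B ∈ Ps) (hcA : c ∈ A) (hcB : c ∈ B) : A = B :=
  (hpart.2 c).unique ⟨hA, hcA⟩ ⟨hB, hcB⟩

theorem IsPartition.injOn_of_mem (hpart : IsPartition Ps) {f : Finset C → C}
    (hf : ∀ A ∈ Ps, f A ∈ A) : Set.InjOn f Ps :=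
  fun A hA B hB h => hpart.eq_of_mem hA hB (hf A hA) (h ▸ hf B hB)

theorem IsPartition.isNomineeSet_image (hpart : IsPartition Ps) {f : Finset C → C}
    (hf : ∀ A ∈ Ps, f A ∈ A) : IsNomineeSet Ps (Ps.image f) := by
  intro A hA
  refine card_eq_one.2 ⟨f A, ext fun c => ?_⟩
  simp only [mem_inter, mem_image, mem_singleton]
  constructor
  · rintro ⟨⟨B, hB, rfl⟩, hcA⟩
    rw [hpart.eq_of_mem hB hA (hf B hB) hcA]
  · rintro rfl
    exact ⟨⟨A, hA, rfl⟩, hf A hA⟩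

end Nominees

section Structure

variable {C : Type*} {τ ℓ : ℕ} {Q : Finset (Fin τ × Fin ℓ)} {prt : Fin τ → Fin ℓ → Finset C}
  {A P Pw : Finset C} {i : Fin τ} {j : Fin ℓ}

theorem qrank_eq_of_mem (hj : (i, j) ∈ Q) (huniq : ∀ j', (i, j') ∈ Q → j' = j) :
    qrank Q i = j := by
  have h : ∃ j, (i, j) ∈ Q := ⟨j, hj⟩
  rw [qrank, dif_pos h, huniq _ (Classical.choose_spec h)]

theorem qrank_eq_of_forall_notMem (h : ∀ j, (i, j) ∉ Q) : qrank Q i = ℓ := by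
  rw [qrank, dif_neg (not_exists.2 h)]

theorem mem_of_qrank_lt (h : qrank Q i < ℓ) : (i, ⟨qrank Q i, h⟩) ∈ Q := by
  by_cases hex : ∃ j, (i, j) ∈ Q
  · simpa only [qrank, dif_pos hex] using hex.choose_spec
  · rw [qrank, dif_neg hex] at h
    exact absurd h (lt_irrefl ℓ)

theorem mem_Qclass : (i, j) ∈ Qclass prt A ↔ prt i j = A := by
  simp [Qclass]

theorem qrank_Qclass_of_eq (hinj : Function.Injective (prt i)) (h : prt i j = A) :
    qrank (Qclass prt A) i = j :=
  qrank_eq_of_mem (mem_Qclass.2 h) fun _ hj' => hinj ((mem_Qclass.1 hj').trans h.symm)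

theorem prt_eq_of_qrank_Qclass_lt (h : qrank (Qclass prt A) i < ℓ) : prt i ⟨_, h⟩ = A :=
  mem_Qclass.1 (mem_of_qrank_lt h)

theorem Qclass_mem_Qhat (hP : prt i j ≠ P) (hPw : prt i j ≠ Pw) :
    Qclass prt (prt i j) ∈ Qhat prt P Pw :=
  mem_image.2 ⟨(i, j), mem_filter.2 ⟨mem_univ _, hP, hPw⟩, rfl⟩

theorem exists_eq_Qclass_of_mem_Qhat (hQ : Q ∈ Qhat prt P Pw) :
    ∃ B, B ≠ P ∧ B ≠ Pw ∧ Q = Qclass prt B := by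
  obtain ⟨ij, hij, rfl⟩ := mem_image.1 hQ
  exact ⟨_, (mem_filter.1 hij).2.1, (mem_filter.1 hij).2.2, rfl⟩

variable {tpref : Fin τ → C → C → Prop} {Ps : Finset (Finset C)} {C' : Finset C}

theorem prt_injective (hC' : IsNomineeSet Ps C')
    (hprt : ∀ i j, prt i j ∈ Ps ∧ ∃ c ∈ C', c ∈ prt i j ∧ prefRank (tpref i) C' c = j)
    (i : Fin τ) : Function.Injective (prt i) := by
  intro j j' h
  obtain ⟨hPs, c, hc, hcj, hcr⟩ := hprt i j
  obtain ⟨-, c', hc', hcj', hcr'⟩ := hprt i j'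
  rw [← h] at hcj'
  rw [hC'.eq_of_mem hPs hc hcj hc' hcj'] at hcr
  exact Fin.ext (hcr.symm.trans hcr')

theorem qrank_Qclass_eq_min [Fintype C] [IsStrictTotalOrder C (tpref i)]
    (hpart : IsPartition Ps) (hC' : IsNomineeSet Ps C')
    (hprt : ∀ i j, prt i j ∈ Ps ∧ ∃ c ∈ C', c ∈ prt i j ∧ prefRank (tpref i) C' c = j)
    (hA : A ∈ Ps) {c : C} (hc : c ∈ C') (hcA : c ∈ A) :
    qrank (Qclass prt A) i = min (prefRank (tpref i) C' c) ℓ := by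
  by_cases hr : prefRank (tpref i) C' c < ℓ
  · obtain ⟨hPs, d, hd, hdj, hdr⟩ := hprt i ⟨_, hr⟩
    have hdc : d = c := prefRank_injOn hd hc hdr
    rw [qrank_Qclass_of_eq (prt_injective hC' hprt i) (hpart.eq_of_mem hPs hA (hdc ▸ hdj) hcA)]
    exact (min_eq_left hr.le).symm
  · rw [min_eq_right (not_lt.1 hr)]
    refine qrank_eq_of_forall_notMem fun j hj => hr ?_
    obtain ⟨-, d, hd, hdj, hdr⟩ := hprt i j
    rw [mem_Qclass.1 hj] at hdj
    rw [← hC'.eq_of_mem hA hd hdj hc hcA, hdr]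
    exact j.isLt

end Structure

section Matching

variable {C : Type*} {τ ℓ : ℕ} {tpref : Fin τ → C → C → Prop} {p w c : C}
  {Q Qp Qw : Finset (Fin τ × Fin ℓ)} {i : Fin τ}

theorem WellPlaced.rel_of_qrank_lt (h : WellPlaced tpref p w Qp Qw c Q)
    (hlt : qrank Q i < qrank Qp i) : tpref i c p := by
  rcases (h i).1 with ⟨hQ, hQp⟩ | hiff
  · omega
  · exact hiff.2 hlt

theorem WellPlaced.qrank_lt_of_rel (h : WellPlaced tpref p w Qp Qw c Q)
    (hQw : qrank Qw i < ℓ) (hcw : tpref i c w) : qrank Q i < qrank Qw i := by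
  rcases (h i).2 with ⟨-, hQw'⟩ | hiff
  · omega
  · exact hiff.1 hcw

def matchedParty (prt : Fin τ → Fin ℓ → Finset C) (μ : Finset (Fin τ × Fin ℓ) → Finset C)
    (P Pw : Finset C) (i : Fin τ) (j : Fin ℓ) : Finset C :=
  if prt i j = P ∨ prt i j = Pw then prt i j else μ (Qclass prt (prt i j))

variable {prt : Fin τ → Fin ℓ → Finset C} {μ : Finset (Fin τ × Fin ℓ) → Finset C}
  {P Pw : Finset C} {Ps : Finset (Finset C)} {C' : Finset C} {nom : Finset C → C}

theorem matchedParty_injective (hinj : Function.Injective (prt i))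
    (hμ : ∀ Q ∈ Qhat prt P Pw, μ Q ≠ P ∧ μ Q ≠ Pw)
    (hμinj : ∀ Q ∈ Qhat prt P Pw, ∀ Q' ∈ Qhat prt P Pw, μ Q = μ Q' → Q = Q') :
    Function.Injective (matchedParty prt μ P Pw i) := by
  have hQhat : ∀ j, ¬(prt i j = P ∨ prt i j = Pw) → Qclass prt (prt i j) ∈ Qhat prt P Pw :=
    fun j hj => Qclass_mem_Qhat (not_or.1 hj).1 (not_or.1 hj).2
  have hside : ∀ j j', (prt i j = P ∨ prt i j = Pw) → ¬(prt i j' = P ∨ prt i j' = Pw) →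
      prt i j ≠ μ (Qclass prt (prt i j')) := by
    rintro j j' (hj | hj) hj' h
    · exact (hμ _ (hQhat j' hj')).1 (h ▸ hj)
    · exact (hμ _ (hQhat j' hj')).2 (h ▸ hj)
  intro j j' h
  unfold matchedParty at h
  split_ifs at h with hj hj' hj'
  · exact hinj h
  · exact absurd h (hside j j' hj hj')
  · exact absurd h.symm (hside j' j hj' hj)
  · exact hinj (mem_Qclass.1 (hμinj _ (hQhat j hj) _ (hQhat j' hj') h ▸ mem_Qclass.2 rfl))

theorem min_prefRank_le_min_prefRank_image [IsStrictTotalOrder C (tpref i)]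
    (hnom : Set.InjOn nom Ps) (hinj : Function.Injective (prt i)) (hpC' : p ∈ C') (hwC' : w ∈ C')
    (hQp : qrank (Qclass prt P) i = min (prefRank (tpref i) C' p) ℓ)
    (hQw : qrank (Qclass prt Pw) i = min (prefRank (tpref i) C' w) ℓ)
    (hPw : Pw ∈ Ps) (hnomPw : nom Pw = w)
    (hμ : ∀ Q ∈ Qhat prt P Pw, μ Q ∈ Ps ∧ μ Q ≠ P ∧ μ Q ≠ Pw)
    (hμinj : ∀ Q ∈ Qhat prt P Pw, ∀ Q' ∈ Qhat prt P Pw, μ Q = μ Q' → Q = Q')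
    (hnommatched : ∀ Q ∈ Qhat prt P Pw,
      WellPlaced tpref p w (Qclass prt P) (Qclass prt Pw) (nom (μ Q)) Q) :
    min (prefRank (tpref i) C' p) ℓ ≤ min (prefRank (tpref i) (Ps.image nom) p) ℓ := by
  refine le_min ?_ (min_le_right _ _)
  rw [prefRank_image hnom, min_comm, ← Fin.card_filter_val_lt]
  refine card_le_card_of_injOn (matchedParty prt μ P Pw i) (fun j hj => ?_)
    (matchedParty_injective hinj (fun Q hQ => (hμ Q hQ).2) hμinj).injOn
  have hjp : (j : ℕ) < qrank (Qclass prt P) i := by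
    rw [hQp]
    exact lt_min (mem_filter.1 hj).2 j.isLt
  have hjP : prt i j ≠ P := fun h => (qrank_Qclass_of_eq hinj h ▸ hjp).false
  by_cases hjPw : prt i j = Pw
  · rw [matchedParty, if_pos (Or.inr hjPw), hjPw]
    refine mem_filter.2 ⟨hPw, hnomPw ▸ (prefRank_lt_prefRank_iff hwC' hpC').1 ?_⟩
    have := qrank_Qclass_of_eq hinj hjPw
    omega
  · have hQ := Qclass_mem_Qhat hjP hjPw
    rw [matchedParty, if_neg (by tauto)]
    refine mem_filter.2 ⟨(hμ _ hQ).1, (hnommatched _ hQ).rel_of_qrank_lt ?_⟩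
    rwa [qrank_Qclass_of_eq hinj rfl]

theorem exists_matchedParty_eq_of_rel [IsStrictTotalOrder C (tpref i)] {A : Finset C}
    (hpC' : p ∈ C') (hwC' : w ∈ C')
    (hQp : qrank (Qclass prt P) i = min (prefRank (tpref i) C' p) ℓ)
    (hQw : qrank (Qclass prt Pw) i = prefRank (tpref i) C' w) (hwℓ : qrank (Qclass prt Pw) i < ℓ)
    (hnomP : nom P = p) (hnomPw : nom Pw = w)
    (hnommatched : ∀ Q ∈ Qhat prt P Pw,
      WellPlaced tpref p w (Qclass prt P) (Qclass prt Pw) (nom (μ Q)) Q)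
    (hnomfree : ∀ A ∈ Ps, A ≠ P → A ≠ Pw → (∀ Q ∈ Qhat prt P Pw, μ Q ≠ A) →
      Safe tpref w (Qclass prt Pw) (nom A))
    (hA : A ∈ Ps) (hAw : tpref i (nom A) w) :
    ∃ j : Fin ℓ, (j : ℕ) < prefRank (tpref i) C' w ∧ matchedParty prt μ P Pw i j = A := by
  by_cases hmatched : ∃ Q ∈ Qhat prt P Pw, μ Q = A
  · obtain ⟨Q, hQ, rfl⟩ := hmatched
    have hlt := (hnommatched Q hQ).qrank_lt_of_rel hwℓ hAw
    obtain ⟨B, hBP, hBPw, rfl⟩ := exists_eq_Qclass_of_mem_Qhat hQ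
    have hBℓ : qrank (Qclass prt B) i < ℓ := hlt.trans hwℓ
    have hjB := prt_eq_of_qrank_Qclass_lt hBℓ
    refine ⟨⟨_, hBℓ⟩, hQw ▸ hlt, ?_⟩
    rw [matchedParty, if_neg (by rw [hjB]; tauto), hjB]
  · obtain rfl : A = P := by
      by_contra hAP
      have hAPw : A ≠ Pw := by
        rintro rfl
        exact irrefl_of _ w (hnomPw ▸ hAw)
      exact asymm (hnomfree A hA hAP hAPw (by simpa using hmatched) i hwℓ.ne) hAw
    have hpw := (prefRank_lt_prefRank_iff hpC' hwC').2 (hnomP ▸ hAw)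
    have hAℓ : qrank (Qclass prt A) i < ℓ := by omega
    have hjA := prt_eq_of_qrank_Qclass_lt hAℓ
    refine ⟨⟨_, hAℓ⟩, show qrank _ i < _ by omega, ?_⟩
    rw [matchedParty, if_pos (Or.inl hjA), hjA]

theorem min_prefRank_image_le_min_prefRank [IsStrictTotalOrder C (tpref i)]
    (hnom : Set.InjOn nom Ps) (hpC' : p ∈ C') (hwC' : w ∈ C')
    (hQp : qrank (Qclass prt P) i = min (prefRank (tpref i) C' p) ℓ)
    (hQw : qrank (Qclass prt Pw) i = min (prefRank (tpref i) C' w) ℓ)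
    (hnomP : nom P = p) (hnomPw : nom Pw = w)
    (hnommatched : ∀ Q ∈ Qhat prt P Pw,
      WellPlaced tpref p w (Qclass prt P) (Qclass prt Pw) (nom (μ Q)) Q)
    (hnomfree : ∀ A ∈ Ps, A ≠ P → A ≠ Pw → (∀ Q ∈ Qhat prt P Pw, μ Q ≠ A) →
      Safe tpref w (Qclass prt Pw) (nom A)) :
    min (prefRank (tpref i) (Ps.image nom) w) ℓ ≤ min (prefRank (tpref i) C' w) ℓ := by
  set r := prefRank (tpref i) C' w
  rcases le_or_gt ℓ r with hr | hr
  · exact (min_le_right _ _).trans (min_eq_right hr).ge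
  have hQw' : qrank (Qclass prt Pw) i = r := by omega
  have hsub : Ps.filter (fun A => tpref i (nom A) w) ⊆
      (univ.filter fun j : Fin ℓ => j < r).image (matchedParty prt μ P Pw i) := by
    intro A hA
    obtain ⟨j, hjr, hjA⟩ := exists_matchedParty_eq_of_rel hpC' hwC' hQp hQw' (hQw' ▸ hr)
      hnomP hnomPw hnommatched hnomfree (mem_filter.1 hA).1 (mem_filter.1 hA).2
    exact mem_image.2 ⟨j, mem_filter.2 ⟨mem_univ j, hjr⟩, hjA⟩
  refine min_le_min_right ℓ ?_
  rw [prefRank_image hnom]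
  calc _ ≤ _ := card_le_card hsub
    _ ≤ #(univ.filter fun j : Fin ℓ => j < r) := card_image_le
    _ = r := by rw [Fin.card_filter_val_lt, min_eq_right hr.le]

end Matching

theorem matching_nomination_short_rule_general
    {C V : Type*} [Fintype C] [Fintype V]
    (τ ℓ : ℕ)
    -- the scoring vector `(a_1, …, a_ℓ, 0, …, 0)` with `a_1 ≥ … ≥ a_ℓ > 0`
    (a : ℕ → ℤ)
    (hanti : ∀ i j : ℕ, i ≤ j → j < ℓ → a j ≤ a i)
    (hpos : 0 < a (ℓ - 1))
    (hzero : ∀ j : ℕ, ℓ ≤ j → a j = 0)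
    -- the voters, their types, and their preference orders
    (pref : V → C → C → Prop)
    (typ : V → Fin τ)
    (tpref : Fin τ → C → C → Prop)
    (hlin : ∀ i : Fin τ, IsStrictTotalOrder C (tpref i))
    (htyp : ∀ v : V, pref v = tpref (typ v))
    -- the parties
    (Ps : Finset (Finset C)) (hpart : IsPartition Ps)
    (P Pw : Finset C) (hP : P ∈ Ps) (hPw : Pw ∈ Ps)
    (p w : C) (hp : p ∈ P) (hw : w ∈ Pw)
    -- the fixed reduced election `E_{C'}`
    (C' : Finset C) (hC' : IsNomineeSet Ps C') (hpC' : p ∈ C') (hwC' : w ∈ C')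
    -- `prt i j` is the party of the nominee at position `j` in the restricted
    -- order of type-`i` voters in `E_{C'}`
    (prt : Fin τ → Fin ℓ → Finset C)
    (hprt : ∀ (i : Fin τ) (j : Fin ℓ), prt i j ∈ Ps ∧
      ∃ c ∈ C', c ∈ prt i j ∧ (C'.filter fun c' => tpref i c' c).card = j.val)
    -- `μ` is a matching of the auxiliary bipartite graph covering every class of
    -- `𝒬̂` and every non-secure party
    (μ : Finset (Fin τ × Fin ℓ) → Finset C)
    (hμedge : ∀ Q ∈ Qhat prt P Pw, μ Q ∈ Ps ∧ μ Q ≠ P ∧ μ Q ≠ Pw ∧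
      ∃ c ∈ μ Q, WellPlaced tpref p w (Qclass prt P) (Qclass prt Pw) c Q)
    (hμinj : ∀ Q ∈ Qhat prt P Pw, ∀ Q' ∈ Qhat prt P Pw, μ Q = μ Q' → Q = Q')
    -- the nominations determined by the matching
    (nom : Finset C → C)
    (hnomP : nom P = p) (hnomPw : nom Pw = w)
    (hnommem : ∀ Pt ∈ Ps, nom Pt ∈ Pt)
    (hnommatched : ∀ Q ∈ Qhat prt P Pw,
      WellPlaced tpref p w (Qclass prt P) (Qclass prt Pw) (nom (μ Q)) Q)
    (hnomfree : ∀ Pt ∈ Ps, Pt ≠ P → Pt ≠ Pw →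
      (∀ Q ∈ Qhat prt P Pw, μ Q ≠ Pt) →
      Safe tpref w (Qclass prt Pw) (nom Pt)) :
    IsNomineeSet Ps (Ps.image nom) ∧
    posScore a pref (Ps.image nom) p ≤ posScore a pref C' p ∧
    posScore a pref C' w ≤ posScore a pref (Ps.image nom) w ∧
    (posScore a pref C' p < posScore a pref C' w →
      ∃ c ∈ Ps.image nom,
        posScore a pref (Ps.image nom) p < posScore a pref (Ps.image nom) c) := by
  have ha := antitone_of_short_scoring hanti hpos.le hzero
  have hnom := hpart.injOn_of_mem hnommem
  have hclass : ∀ i, ∀ A ∈ Ps, ∀ c ∈ C', c ∈ A →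
      qrank (Qclass prt A) i = min (prefRank (tpref i) C' c) ℓ := fun i _ hA _ hc hcA =>
    have := hlin i
    qrank_Qclass_eq_min hpart hC' hprt hA hc hcA
  have hp_down : posScore a pref (Ps.image nom) p ≤ posScore a pref C' p := by
    refine posScore_le_posScore ha hzero fun v => ?_
    have := hlin (typ v)
    rw [htyp v]
    exact min_prefRank_le_min_prefRank_image hnom (prt_injective hC' hprt _) hpC' hwC'
      (hclass _ P hP p hpC' hp) (hclass _ Pw hPw w hwC' hw) hPw hnomPw
      (fun Q hQ => ⟨(hμedge Q hQ).1, (hμedge Q hQ).2.1, (hμedge Q hQ).2.2.1⟩) hμinj hnommatched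
  have hw_up : posScore a pref C' w ≤ posScore a pref (Ps.image nom) w := by
    refine posScore_le_posScore ha hzero fun v => ?_
    have := hlin (typ v)
    rw [htyp v]
    exact min_prefRank_image_le_min_prefRank hnom hpC' hwC' (hclass _ P hP p hpC' hp)
      (hclass _ Pw hPw w hwC' hw) hnomP hnomPw hnommatched hnomfree
  refine ⟨hpart.isNomineeSet_image hnommem, hp_down, hw_up, fun hlt => ⟨w, ?_, by linarith⟩⟩
  exact hnomPw ▸ mem_image_of_mem nom hPw

/-- nominating along a matching `μ` that covers all classes of `𝒬̂`
and all non-secure parties (schematically, a well-placed candidate for matched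
parties and a safe candidate for unmatched parties) yields a nominee set on which
`p` scores no more, and `w` no less, than in the fixed reduced election `E_{C'}`;
in particular if `w` beats `p` in `E_{C'}`, then `p` is not a winner. -/
theorem matching_nomination_short_rule
    {C V : Type*} [Fintype C] [Fintype V]
    (τ ℓ : ℕ) (hℓ : 1 ≤ ℓ)
    -- the scoring vector `(a_1, …, a_ℓ, 0, …, 0)` with `a_1 ≥ … ≥ a_ℓ > 0`
    (a : ℕ → ℤ)
    (hanti : ∀ i j : ℕ, i ≤ j → j < ℓ → a j ≤ a i)
    (hpos : 0 < a (ℓ - 1))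
    (hzero : ∀ j : ℕ, ℓ ≤ j → a j = 0)
    -- the voters, their types, and their preference orders
    (pref : V → C → C → Prop)
    (typ : V → Fin τ) (htypsurj : Function.Surjective typ)
    (tpref : Fin τ → C → C → Prop)
    (hlin : ∀ i : Fin τ, IsStrictTotalOrder C (tpref i))
    (htyp : ∀ v : V, pref v = tpref (typ v))
    (htypdist : ∀ i i' : Fin τ, tpref i = tpref i' → i = i')
    -- the parties
    (Ps : Finset (Finset C)) (hpart : IsPartition Ps)
    (P Pw : Finset C) (hP : P ∈ Ps) (hPw : Pw ∈ Ps) (hPPw : P ≠ Pw)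
    (p w : C) (hp : p ∈ P) (hw : w ∈ Pw)
    -- the fixed reduced election `E_{C'}`
    (C' : Finset C) (hC' : IsNomineeSet Ps C') (hpC' : p ∈ C') (hwC' : w ∈ C')
    -- `prt i j` is the party of the nominee at position `j` in the restricted
    -- order of type-`i` voters in `E_{C'}`
    (prt : Fin τ → Fin ℓ → Finset C)
    (hprt : ∀ (i : Fin τ) (j : Fin ℓ), prt i j ∈ Ps ∧
      ∃ c ∈ C', c ∈ prt i j ∧ (C'.filter fun c' => tpref i c' c).card = j.val)
    -- `μ` is a matching of the auxiliary bipartite graph covering every class of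
    -- `𝒬̂` and every non-secure party
    (μ : Finset (Fin τ × Fin ℓ) → Finset C)
    (hμedge : ∀ Q ∈ Qhat prt P Pw, μ Q ∈ Ps ∧ μ Q ≠ P ∧ μ Q ≠ Pw ∧
      ∃ c ∈ μ Q, WellPlaced tpref p w (Qclass prt P) (Qclass prt Pw) c Q)
    (hμinj : ∀ Q ∈ Qhat prt P Pw, ∀ Q' ∈ Qhat prt P Pw, μ Q = μ Q' → Q = Q')
    (hμcover : ∀ Pt ∈ Ps, Pt ≠ P → Pt ≠ Pw →
      (¬ ∃ c ∈ Pt, Safe tpref w (Qclass prt Pw) c) →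
      ∃ Q ∈ Qhat prt P Pw, μ Q = Pt)
    -- the nominations determined by the matching
    (nom : Finset C → C)
    (hnomP : nom P = p) (hnomPw : nom Pw = w)
    (hnommem : ∀ Pt ∈ Ps, nom Pt ∈ Pt)
    (hnommatched : ∀ Q ∈ Qhat prt P Pw,
      WellPlaced tpref p w (Qclass prt P) (Qclass prt Pw) (nom (μ Q)) Q)
    (hnomfree : ∀ Pt ∈ Ps, Pt ≠ P → Pt ≠ Pw →
      (∀ Q ∈ Qhat prt P Pw, μ Q ≠ Pt) →
      Safe tpref w (Qclass prt Pw) (nom Pt)) :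
    IsNomineeSet Ps (Ps.image nom) ∧
    posScore a pref (Ps.image nom) p ≤ posScore a pref C' p ∧
    posScore a pref C' w ≤ posScore a pref (Ps.image nom) w ∧
    (posScore a pref C' p < posScore a pref C' w →
      ∃ c ∈ Ps.image nom,
        posScore a pref (Ps.image nom) p < posScore a pref (Ps.image nom) c) :=
  matching_nomination_short_rule_general τ ℓ a hanti hpos hzero pref typ tpref hlin htyp Ps hpart P
    Pw hP hPw p w hp hw C' hC' hpC' hwC' prt hprt μ hμedge hμinj nom hnomP hnomPw hnommem
    hnommatched hnomfree
end
end

section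
/- With the data derived from a fixed reduced election E_{C'} as described in the context: the map assigning to each class Q ∈ 𝒬̂ its common party value prt(Q) is injective; for every Q ∈ 𝒬̂ the nominee of prt(Q) in E_{C'} is well placed for Q, so that M* = {(prt(Q), Q) : Q ∈ 𝒬̂} is a matching in the auxiliary bipartite graph G covering every class of 𝒬̂; and every party in 𝒫 \ {P, P_w} not covered by M* is secure (its nominee in E_{C'} is a safe candidate). -/
open scoped Classical

noncomputable section

/-- (a) distinct classes of `𝒬̂` have distinct party values;
(b) for each `Q ∈ 𝒬̂`, its party belongs to `𝒫 \ {P, P_w}` and its nominee in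
`E_{C'}` is well placed for `Q` — so `M* = {(prt(Q), Q) : Q ∈ 𝒬̂}` is a matching
in the auxiliary bipartite graph covering all of `𝒬̂`; and (c) every party of
`𝒫 \ {P, P_w}` not covered by `M*` is secure, its nominee in `E_{C'}` being safe. -/
theorem structure_classes_matching
    {C V : Type*} [Fintype C] [Fintype V]
    (τ ℓ : ℕ) (hℓ : 1 ≤ ℓ)
    -- the voters, their types, and their preference orders
    (pref : V → C → C → Prop)
    (typ : V → Fin τ) (htypsurj : Function.Surjective typ)
    (tpref : Fin τ → C → C → Prop)
    (hlin : ∀ i : Fin τ, IsStrictTotalOrder C (tpref i))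
    (htyp : ∀ v : V, pref v = tpref (typ v))
    (htypdist : ∀ i i' : Fin τ, tpref i = tpref i' → i = i')
    -- the parties
    (Ps : Finset (Finset C)) (hpart : IsPartition Ps)
    (P Pw : Finset C) (hP : P ∈ Ps) (hPw : Pw ∈ Ps) (hPPw : P ≠ Pw)
    (p w : C) (hp : p ∈ P) (hw : w ∈ Pw)
    -- the fixed reduced election `E_{C'}`
    (C' : Finset C) (hC' : IsNomineeSet Ps C') (hpC' : p ∈ C') (hwC' : w ∈ C')
    -- `prt i j` is the party of the nominee at position `j` in the restricted
    -- order of type-`i` voters in `E_{C'}`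
    (prt : Fin τ → Fin ℓ → Finset C)
    (hprt : ∀ (i : Fin τ) (j : Fin ℓ), prt i j ∈ Ps ∧
      ∃ c ∈ C', c ∈ prt i j ∧ (C'.filter fun c' => tpref i c' c).card = j.val) :
    -- (a) the class-to-party assignment is injective
    (∀ Q ∈ Qhat prt P Pw, ∀ Q' ∈ Qhat prt P Pw, ∀ ij ∈ Q, ∀ ij' ∈ Q',
        prt ij.1 ij.2 = prt ij'.1 ij'.2 → Q = Q') ∧
    -- (b) each class' party lies in `𝒫 \ {P, P_w}`, and its nominee in `E_{C'}`
    -- is well placed for the class, so `M*` is a matching covering `𝒬̂`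
    (∀ Q ∈ Qhat prt P Pw, ∀ ij ∈ Q,
        prt ij.1 ij.2 ∈ Ps ∧ prt ij.1 ij.2 ≠ P ∧ prt ij.1 ij.2 ≠ Pw ∧
        (∃ c ∈ prt ij.1 ij.2,
          WellPlaced tpref p w (Qclass prt P) (Qclass prt Pw) c Q) ∧
        (∀ c ∈ C', c ∈ prt ij.1 ij.2 →
          WellPlaced tpref p w (Qclass prt P) (Qclass prt Pw) c Q)) ∧
    -- (c) parties not covered by `M*` are secure: their nominee in `E_{C'}` is safe
    (∀ Pt ∈ Ps, Pt ≠ P → Pt ≠ Pw →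
        (∀ (i : Fin τ) (j : Fin ℓ), prt i j ≠ Pt) →
        ∀ c ∈ C', c ∈ Pt → Safe tpref w (Qclass prt Pw) c) := by
  classical
  set r : Fin τ → C → ℕ := fun i c => (C'.filter fun c' => tpref i c' c).card with hrdef
  -- party uniqueness
  have hpu : ∀ {Pt Pt' : Finset C} {c : C}, Pt ∈ Ps → Pt' ∈ Ps → c ∈ Pt → c ∈ Pt' → Pt = Pt' := by
    intro Pt Pt' c h1 h2 h3 h4
    obtain ⟨Pu, _, hu⟩ := hpart.2 c
    exact (hu Pt ⟨h1, h3⟩).trans (hu Pt' ⟨h2, h4⟩).symm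
  -- nominee uniqueness
  have hnu : ∀ {Pt : Finset C} {c c' : C}, Pt ∈ Ps → c ∈ C' → c ∈ Pt → c' ∈ C' → c' ∈ Pt →
      c = c' := by
    intro Pt c c' hPt hc1 hc2 hc'1 hc'2
    obtain ⟨a, ha⟩ := Finset.card_eq_one.1 (hC' Pt hPt)
    have h1 : c ∈ ({a} : Finset C) := ha ▸ Finset.mem_inter.2 ⟨hc1, hc2⟩
    have h2 : c' ∈ ({a} : Finset C) := ha ▸ Finset.mem_inter.2 ⟨hc'1, hc'2⟩
    simp only [Finset.mem_singleton] at h1 h2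
    rw [h1, h2]
  -- rank is strictly monotone
  have hmono : ∀ (i : Fin τ) (c c' : C), c ∈ C' → tpref i c c' → r i c < r i c' := by
    intro i c c' hc h
    haveI := hlin i
    apply Finset.card_lt_card
    constructor
    · intro x hx
      simp only [Finset.mem_filter] at hx ⊢
      exact ⟨hx.1, trans_of (tpref i) hx.2 h⟩
    · intro hsub
      have hcm : c ∈ C'.filter (fun x => tpref i x c) := hsub (Finset.mem_filter.2 ⟨hc, h⟩)
      exact irrefl_of (tpref i) c (Finset.mem_filter.1 hcm).2
  have hpref_iff : ∀ (i : Fin τ) (c c' : C), c ∈ C' → c' ∈ C' → c ≠ c' →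
      (tpref i c c' ↔ r i c < r i c') := by
    intro i c c' hc hc' hne
    haveI := hlin i
    constructor
    · exact hmono i c c' hc
    · intro hlt
      rcases trichotomous_of (tpref i) c c' with h | h | h
      · exact h
      · exact absurd h hne
      · exact absurd (hmono i c' c hc' h) (by omega)
  have hrinj : ∀ (i : Fin τ) (c c' : C), c ∈ C' → c' ∈ C' → r i c = r i c' → c = c' := by
    intro i c c' hc hc' h
    haveI := hlin i
    by_contra hne
    rcases trichotomous_of (tpref i) c c' with h1 | h1 | h1
    · exact absurd (hmono i c c' hc h1) (by omega)
    · exact hne h1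
    · exact absurd (hmono i c' c hc' h1) (by omega)
  -- the nominee occupying a position has rank equal to that position
  have hrank_of_mem : ∀ (i : Fin τ) (j : Fin ℓ) (c : C), c ∈ C' → c ∈ prt i j →
      r i c = j.val := by
    intro i j c hc hcp
    obtain ⟨c', hc', hcp', hrk⟩ := (hprt i j).2
    rw [hnu (hprt i j).1 hc hcp hc' hcp']
    exact hrk
  have hmem_of_rank : ∀ (i : Fin τ) (c : C), c ∈ C' → ∀ (h : r i c < ℓ),
      c ∈ prt i ⟨r i c, h⟩ := by
    intro i c hc h
    obtain ⟨c', hc', hcp', hrk⟩ := (hprt i ⟨r i c, h⟩).2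
    have hcc : c = c' := hrinj i c c' hc hc' (by exact hrk.symm)
    subst hcc; exact hcp'
  have hQmem : ∀ (Pt : Finset C) (ij : Fin τ × Fin ℓ),
      ij ∈ Qclass prt Pt ↔ prt ij.1 ij.2 = Pt := by
    intro Pt ij; simp [Qclass]
  -- the key qrank computation
  have hqrank : ∀ (i : Fin τ) (Pt : Finset C), Pt ∈ Ps → ∀ c, c ∈ C' → c ∈ Pt →
      qrank (Qclass prt Pt) i = min (r i c) ℓ := by
    intro i Pt hPt c hc hcPt
    unfold qrank
    split_ifs with h
    · set j0 := Classical.choose h with hj0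
      have hspec : prt i j0 = Pt := (hQmem Pt (i, j0)).1 (Classical.choose_spec h)
      have hcm : c ∈ prt i j0 := by rw [hspec]; exact hcPt
      have hre : r i c = j0.val := hrank_of_mem i j0 c hc hcm
      have hlt := j0.isLt
      omega
    · push_neg at h
      have hge : ℓ ≤ r i c := by
        by_contra hlt
        push_neg at hlt
        have hm := hmem_of_rank i c hc hlt
        have hpe : prt i ⟨r i c, hlt⟩ = Pt := hpu (hprt i ⟨r i c, hlt⟩).1 hPt hm hcPt
        exact h ⟨r i c, hlt⟩ ((hQmem Pt (i, ⟨r i c, hlt⟩)).2 hpe)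
      omega
  -- well-placedness of nominees
  have hwp : ∀ (Pt : Finset C), Pt ∈ Ps → Pt ≠ P → Pt ≠ Pw → ∀ c, c ∈ C' → c ∈ Pt →
      WellPlaced tpref p w (Qclass prt P) (Qclass prt Pw) c (Qclass prt Pt) := by
    intro Pt hPt hneP hnePw c hc hcPt i
    have hcp : c ≠ p := fun h => hneP (hpu hPt hP hcPt (by rw [h]; exact hp))
    have hcw : c ≠ w := fun h => hnePw (hpu hPt hPw hcPt (by rw [h]; exact hw))
    have h1 := hqrank i Pt hPt c hc hcPt
    have h2 := hqrank i P hP p hpC' hp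
    have h3 := hqrank i Pw hPw w hwC' hw
    constructor
    · by_cases hcase : ℓ ≤ r i c ∧ ℓ ≤ r i p
      · left; omega
      · right
        rw [hpref_iff i c p hc hpC' hcp, h1, h2]
        omega
    · by_cases hcase : ℓ ≤ r i c ∧ ℓ ≤ r i w
      · left; omega
      · right
        rw [hpref_iff i c w hc hwC' hcw, h1, h3]
        omega
  refine ⟨?_, ?_, ?_⟩
  · -- (a)
    intro Q hQ Q' hQ' ij hij ij' hij' heq
    simp only [Qhat, Finset.mem_image, Finset.mem_filter] at hQ hQ'
    obtain ⟨a, -, rfl⟩ := hQ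
    obtain ⟨b, -, rfl⟩ := hQ'
    rw [hQmem] at hij hij'
    rw [← hij, ← hij', heq]
  · -- (b)
    intro Q hQ ij hij
    simp only [Qhat, Finset.mem_image, Finset.mem_filter] at hQ
    obtain ⟨a, ⟨-, haP, haPw⟩, rfl⟩ := hQ
    rw [hQmem] at hij
    rw [← hij] at haP haPw ⊢
    have hPtmem := (hprt ij.1 ij.2).1
    obtain ⟨c, hcs⟩ := Finset.card_eq_one.1 (hC' _ hPtmem)
    have hcmem : c ∈ C' ∩ prt ij.1 ij.2 := by rw [hcs]; exact Finset.mem_singleton_self c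
    rw [Finset.mem_inter] at hcmem
    refine ⟨hPtmem, haP, haPw, ⟨c, hcmem.2, hwp _ hPtmem haP haPw c hcmem.1 hcmem.2⟩, ?_⟩
    intro c' hc' hc'p
    exact hwp _ hPtmem haP haPw c' hc' hc'p
  · -- (c)
    intro Pt hPt hneP hnePw hnone c hc hcPt i hqw
    rw [hqrank i Pw hPw w hwC' hw] at hqw
    have hwlt : r i w < ℓ := by omega
    have hge : ℓ ≤ r i c := by
      by_contra hlt
      push_neg at hlt
      have hm := hmem_of_rank i c hc hlt
      exact hnone i ⟨r i c, hlt⟩ (hpu (hprt i ⟨r i c, hlt⟩).1 hPt hm hcPt)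
    haveI := hlin i
    rcases trichotomous_of (tpref i) w c with h | h | h
    · exact h
    · subst h; omega
    · exact absurd (hmono i c w hc h) (by omega)
end
end
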